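/- Let H be the set of formal Laurent series L ∈ F_p((X^{-1})) with ν(L) < 0, equipped with the normalized Haar measure h. For polynomials B_1, ..., B_k ∈ F_p[X] each of degree at least 1, the set R(B_1,...,B_k) = {L ∈ H : A_j(L) = B_j for 1 ≤ j ≤ k} (Laurent series whose first k continued fraction partial quotients are B_1,...,B_k) has Haar measure h(R(B_1,...,B_k)) = p^{-2(deg B_1 + ... + deg B_k)}. -/

import Mathlib

/-!
Write `L ∈ H` as `1 ≤ L.orderTop`. For `L ∈ H`, the first partial quotient of `L` is `B` exactly
when `1/L = B + M` with `M ∈ H`, and then for every `C ∈ H` the valuation identity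
`ν(L - 1/(B + C)) = ν(M - C) - 2 deg B` holds. By induction on `k`, the first `k` partial
quotients of `L` are `B₁, …, B_k` exactly when `L` agrees with the finite continued fraction
`[0; B₁, …, B_k]` in its first `2 (deg B₁ + ⋯ + deg B_k)` coefficients, so the cylinder set is a
coordinate cylinder of that length.
-/
open scoped Classical ENNReal
open Polynomial

noncomputable section

namespace KH

/-- The field `F_p((X⁻¹))` of formal Laurent series in `X⁻¹` over `ZMod p`,
modeled as Hahn series over `ℤ`: the coefficient at `i : ℤ` is the coefficient of `X^{-i}`. -/
abbrev LS (p : ℕ) := HahnSeries ℤ (ZMod p)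

/-- The element `X` of `F_p((X⁻¹))` (exponent `-1` in `X⁻¹`). -/
def Xls (p : ℕ) : LS p := HahnSeries.single (-1 : ℤ) 1

/-- `ν(L) = -w` where `w` is the order of `L` (`ν(0) = 0` by convention). -/
def nu {p : ℕ} (L : LS p) : ℤ := -(HahnSeries.order L)

/-- Embedding of polynomials `F_p[X] → F_p((X⁻¹))`, sending `X` to `Xls`. -/
def P2L (p : ℕ) [Fact p.Prime] : Polynomial (ZMod p) →+* LS p :=
  (Polynomial.aeval (Xls p)).toRingHom

/-- The fractional part `{L} = ∑_{i ≥ 1} a_i X^{-i}`. -/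
def frac {p : ℕ} (L : LS p) : LS p where
  coeff i := if 1 ≤ i then L.coeff i else 0
  isPWO_support' := L.isPWO_support'.mono (by
    intro i hi
    by_cases h : (1:ℤ) ≤ i <;> simp [HahnSeries.support, h] at hi ⊢ <;> tauto)

/-- Continued fraction remainders: `cfRem L 0 = L`, `cfRem L (n+1) = 1/{cfRem L n}`. -/
def cfRem {p : ℕ} [Fact p.Prime] (L : LS p) : ℕ → LS p
  | 0 => L
  | n + 1 => (frac (cfRem L n))⁻¹

/-- The `n`-th continued fraction partial quotient of `L` (as a Laurent series; it is the
polynomial part of the `n`-th remainder). -/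
def cfA {p : ℕ} [Fact p.Prime] (L : LS p) (n : ℕ) : LS p :=
  cfRem L n - frac (cfRem L n)

/-- The degree of the `n`-th partial quotient. -/
def degA {p : ℕ} [Fact p.Prime] (L : LS p) (n : ℕ) : ℤ := nu (cfA L n)

/-- Denominators `Q_h` of the convergents of `L`. -/
def cfQ {p : ℕ} [Fact p.Prime] (L : LS p) : ℕ → LS p
  | 0 => 1
  | 1 => cfA L 1
  | n + 2 => cfA L (n + 2) * cfQ L (n + 1) + cfQ L n

/-- Numerators `P_h` of the convergents of `L`. -/
def cfP {p : ℕ} [Fact p.Prime] (L : LS p) : ℕ → LS p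
  | 0 => cfA L 0
  | 1 => cfA L 1 * cfA L 0 + 1
  | n + 2 => cfA L (n + 2) * cfP L (n + 1) + cfP L n

/-- `d_h = deg Q_h`. -/
def dQ {p : ℕ} [Fact p.Prime] (L : LS p) (h : ℕ) : ℤ := nu (cfQ L h)

/-- Evaluation at `X = p` of (the fractional part of) a Laurent series:
`∑_{i ≥ 1} a_i p^{-i}` with digits `a_i ∈ {0, …, p-1}`. -/
def evalAtP {p : ℕ} (L : LS p) : ℝ :=
  ∑' i : ℕ, ((L.coeff ((i : ℤ) + 1)).val : ℝ) / (p : ℝ) ^ (i + 1)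

/-- The polynomial over `F_p` associated with `n ∈ ℕ`, whose coefficients are the
base-`p` digits of `n`. -/
def nPoly (p : ℕ) (n : ℕ) : Polynomial (ZMod p) :=
  ∑ i ∈ Finset.range (n + 1), Polynomial.C ((n / p ^ i % p : ℕ) : ZMod p) * Polynomial.X ^ i

/-- The `n`-th point of the digital Kronecker sequence associated with `L`. -/
def kron (p : ℕ) [Fact p.Prime] (L : LS p) (n : ℕ) : ℝ :=
  evalAtP (frac (P2L p (nPoly p n) * L))

/-- The `i`-th digit of `n(X)` in base `b(X)`. -/
def haltonDigit (p : ℕ) [Fact p.Prime] (b : Polynomial (ZMod p)) (n i : ℕ) :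
    Polynomial (ZMod p) :=
  (nPoly p n /ₘ b ^ i) %ₘ b

/-- Evaluation of a polynomial over `F_p` at `p` (digits in `{0,…,p-1}`). -/
def polyEvalNat (p : ℕ) (a : Polynomial (ZMod p)) : ℕ :=
  ∑ i ∈ Finset.range (a.natDegree + 1), (a.coeff i).val * p ^ i

/-- The `n`-th point of the van der Corput sequence in base `b(X)` over `F_p`. -/
def vdc (p : ℕ) [Fact p.Prime] (b : Polynomial (ZMod p)) (n : ℕ) : ℝ :=
  ∑' i : ℕ, (polyEvalNat p (haltonDigit p b n i) : ℝ) / (p : ℝ) ^ (b.natDegree * (i + 1))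

/-- Number of indices `n < N` with `z n` in the box `∏ [a i, b i)`. -/
def countIn (d : ℕ) (z : ℕ → Fin d → ℝ) (N : ℕ) (a b : Fin d → ℝ) : ℕ :=
  ((Finset.range N).filter fun n => ∀ i, a i ≤ z n i ∧ z n i < b i).card

/-- The (extreme) discrepancy of the first `N` points of `z` in `[0,1)^d`. -/
def disc (d : ℕ) (z : ℕ → Fin d → ℝ) (N : ℕ) : ℝ :=
  sSup { r | ∃ a b : Fin d → ℝ, (∀ i, 0 ≤ a i ∧ a i ≤ b i ∧ b i ≤ 1) ∧
    r = |(countIn d z N a b : ℝ) / N - ∏ i, (b i - a i)| }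

/-- The star discrepancy of the first `N` points of `z` in `[0,1)^d`. -/
def starDisc (d : ℕ) (z : ℕ → Fin d → ℝ) (N : ℕ) : ℝ :=
  sSup { r | ∃ b : Fin d → ℝ, (∀ i, 0 < b i ∧ b i ≤ 1) ∧
    r = |(countIn d z N (fun _ => 0) b : ℝ) / N - ∏ i, b i| }

/-- The Laurent series `∑_{i ≥ 1} a_{i-1} X^{-i}` associated with a coefficient
sequence `a : ℕ → ZMod p`; this identifies `H = {L : ν(L) < 0}` with `ℕ → ZMod p`. -/
def toLS (p : ℕ) (a : ℕ → ZMod p) : LS p where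
  coeff i := if h : 1 ≤ i then a (i - 1).toNat else 0
  isPWO_support' := by
    have : BddBelow {i : ℤ | (if h : 1 ≤ i then a (i - 1).toNat else 0) ≠ 0} := by
      refine ⟨1, fun i hi => ?_⟩
      by_cases h : (1:ℤ) ≤ i
      · exact h
      · simp [h] at hi
    exact (Set.isPWO_iff_isWF.mpr this.wellFoundedOn_lt)

instance : MeasurableSpace (ZMod p) := ⊤

/-- A `(t, m, s)`-net in base `p`. -/
def IsNet (p t m s : ℕ) (P : Fin (p ^ m) → Fin s → ℝ) : Prop :=
  t ≤ m ∧ ∀ (d a : Fin s → ℕ), (∑ i, d i) = m - t → (∀ i, a i < p ^ d i) →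
    (Finset.univ.filter fun n => ∀ i,
      (a i : ℝ) / (p : ℝ) ^ d i ≤ P n i ∧ P n i < ((a i : ℝ) + 1) / (p : ℝ) ^ d i).card = p ^ t

/-- A `(t, s)`-sequence in base `p`. -/
def IsTSeq (p t s : ℕ) (z : ℕ → Fin s → ℝ) : Prop :=
  ∀ m k : ℕ, t < m → IsNet p t m s fun n => z (k * p ^ m + (n : ℕ))

section OrderTop

variable {Γ K : Type*} [AddCommGroup Γ] [LinearOrder Γ] [IsOrderedAddMonoid Γ] [Field K]

theorem _root_.HahnSeries.orderTop_inv_of_orderTop_eq {x : HahnSeries Γ K} {g : Γ}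
    (hx : x.orderTop = g) : x⁻¹.orderTop = ↑(-g) := by
  have hx0 : x ≠ 0 := HahnSeries.orderTop_ne_top.1 (hx ▸ WithTop.coe_ne_top)
  obtain ⟨h, hh⟩ := WithTop.ne_top_iff_exists.1
    (HahnSeries.orderTop_ne_top.2 (inv_ne_zero hx0))
  have hmul := HahnSeries.orderTop_mul x x⁻¹
  rw [mul_inv_cancel₀ hx0, HahnSeries.orderTop_one, hx, ← hh, ← WithTop.coe_add,
    ← WithTop.coe_zero, WithTop.coe_eq_coe] at hmul
  rw [← hh, eq_neg_of_add_eq_zero_right hmul.symm]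

theorem _root_.HahnSeries.orderTop_inv_sub_inv {u v : HahnSeries Γ K} (hu : u ≠ 0) (hv : v ≠ 0) :
    (u⁻¹ - v⁻¹).orderTop = (u - v).orderTop + u⁻¹.orderTop + v⁻¹.orderTop := by
  rw [inv_sub_inv' hu hv, HahnSeries.orderTop_mul, HahnSeries.orderTop_mul, ← neg_sub,
    HahnSeries.orderTop_neg, add_comm u⁻¹.orderTop]

end OrderTop

variable {p : ℕ}

lemma coeff_eq_zero_of_one_le_orderTop {L : LS p} (hL : 1 ≤ L.orderTop) {i : ℤ} (hi : i < 1) :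
    L.coeff i = 0 :=
  HahnSeries.coeff_eq_zero_of_lt_orderTop (lt_of_lt_of_le (by exact_mod_cast hi) hL)

lemma one_le_orderTop_frac (L : LS p) : 1 ≤ (frac L).orderTop :=
  HahnSeries.le_orderTop_iff_forall.2 fun j hj =>
    if_neg (by exact_mod_cast not_le.2 hj)

lemma frac_eq_self {L : LS p} (hL : 1 ≤ L.orderTop) : frac L = L := by
  ext i
  change (if 1 ≤ i then L.coeff i else 0) = L.coeff i
  split_ifs with hi
  · rfl
  · exact (coeff_eq_zero_of_one_le_orderTop hL (not_le.1 hi)).symm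

lemma coeff_toLS (a : ℕ → ZMod p) (i : ℤ) :
    (toLS p a).coeff i = if 1 ≤ i then a (i - 1).toNat else 0 :=
  dite_eq_ite

lemma one_le_orderTop_toLS (a : ℕ → ZMod p) : 1 ≤ (toLS p a).orderTop :=
  HahnSeries.le_orderTop_iff_forall.2 fun j hj =>
    dif_neg (by exact_mod_cast not_le.2 hj)

variable [Fact p.Prime]

lemma Xls_pow (n : ℕ) : Xls p ^ n = HahnSeries.single (-(n : ℤ)) 1 := by
  induction n with
  | zero => simp [HahnSeries.single_zero_one]
  | succ n ih =>
    rw [pow_succ, ih, Xls, HahnSeries.single_mul_single, mul_one, Nat.cast_succ, neg_add]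

lemma P2L_monomial (n : ℕ) (a : ZMod p) :
    P2L p (monomial n a) = HahnSeries.single (-(n : ℤ)) a := by
  have halg : algebraMap (ZMod p) (LS p) = HahnSeries.C := RingHom.ext_zmod _ _
  rw [P2L, AlgHom.toRingHom_eq_coe, RingHom.coe_coe, aeval_monomial, Xls_pow, halg,
    HahnSeries.C_apply, HahnSeries.single_mul_single, zero_add, mul_one]

lemma coeff_P2L (b : (ZMod p)[X]) (i : ℤ) :
    (P2L p b).coeff i = if 0 < i then 0 else b.coeff (-i).toNat := by
  induction b using Polynomial.induction_on' with
  | add f g hf hg =>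
    rw [map_add, HahnSeries.coeff_add, hf, hg, coeff_add]
    split_ifs <;> simp
  | monomial n a =>
    rw [P2L_monomial, HahnSeries.coeff_single, coeff_monomial]
    split_ifs <;> first | rfl | omega

lemma orderTop_P2L {b : (ZMod p)[X]} (hb : b ≠ 0) :
    (P2L p b).orderTop = ↑(-(b.natDegree : ℤ)) := by
  refine le_antisymm (HahnSeries.orderTop_le_of_coeff_ne_zero ?_)
    (HahnSeries.le_orderTop_iff_forall.2 fun j hj => ?_)
  · rw [coeff_P2L, if_neg (by omega), neg_neg, Int.toNat_natCast]
    exact leadingCoeff_ne_zero.2 hb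
  · have hj : j < -(b.natDegree : ℤ) := WithTop.coe_lt_coe.1 hj
    rw [coeff_P2L]
    split_ifs
    · rfl
    · exact coeff_eq_zero_of_natDegree_lt (by omega)

lemma orderTop_P2L_add {b : (ZMod p)[X]} (hb : b ≠ 0) {M : LS p} (hM : 1 ≤ M.orderTop) :
    (P2L p b + M).orderTop = ↑(-(b.natDegree : ℤ)) := by
  rw [HahnSeries.orderTop_add_eq_left] <;> rw [orderTop_P2L hb]
  exact lt_of_lt_of_le (by exact_mod_cast (by omega : -(b.natDegree : ℤ) < 1)) hM

lemma frac_P2L_add (b : (ZMod p)[X]) {M : LS p} (hM : 1 ≤ M.orderTop) :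
    frac (P2L p b + M) = M := by
  ext i
  change (if 1 ≤ i then (P2L p b + M).coeff i else 0) = M.coeff i
  split_ifs with hi
  · rw [HahnSeries.coeff_add, coeff_P2L, if_pos (by omega), zero_add]
  · exact (coeff_eq_zero_of_one_le_orderTop hM (not_le.1 hi)).symm

lemma cfRem_one {L : LS p} (hL : 1 ≤ L.orderTop) : cfRem L 1 = L⁻¹ :=
  congrArg Inv.inv (frac_eq_self hL)

lemma cfRem_add_two (L : LS p) (n : ℕ) :
    cfRem L (n + 2) = cfRem (frac (cfRem L 1)) (n + 1) := by
  induction n with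
  | zero => exact congrArg Inv.inv (frac_eq_self (one_le_orderTop_frac _)).symm
  | succ n ih => exact congrArg (fun x => (frac x)⁻¹) ih

lemma cfA_one {L : LS p} (hL : 1 ≤ L.orderTop) : cfA L 1 = L⁻¹ - frac L⁻¹ := by
  rw [cfA, cfRem_one hL]

lemma cfA_add_two {L : LS p} (hL : 1 ≤ L.orderTop) (n : ℕ) :
    cfA L (n + 2) = cfA (frac L⁻¹) (n + 1) := by
  rw [cfA, cfA, cfRem_add_two, cfRem_one hL]

lemma orderTop_sub_inv_P2L_add {b : (ZMod p)[X]} (hb : b ≠ 0) {C : LS p} (hC : 1 ≤ C.orderTop)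
    {L : LS p} (hL : L.orderTop = ((b.natDegree : ℤ) : WithTop ℤ)) :
    (L - (P2L p b + C)⁻¹).orderTop =
      (L⁻¹ - (P2L p b + C)).orderTop + ↑(2 * (b.natDegree : ℤ)) := by
  have hY := orderTop_P2L_add hb hC
  have hY0 : P2L p b + C ≠ 0 := HahnSeries.orderTop_ne_top.1 (hY ▸ WithTop.coe_ne_top)
  have hL0 : L ≠ 0 := HahnSeries.orderTop_ne_top.1 (hL ▸ WithTop.coe_ne_top)
  conv_lhs => rw [← inv_inv L]
  rw [HahnSeries.orderTop_inv_sub_inv (inv_ne_zero hL0) hY0, inv_inv, hL,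
    HahnSeries.orderTop_inv_of_orderTop_eq hY, neg_neg, add_assoc, ← WithTop.coe_add, two_mul]

lemma frac_inv_of_cfA_one_eq {L : LS p} (hL : 1 ≤ L.orderTop) {b : (ZMod p)[X]}
    (hA : cfA L 1 = P2L p b) : frac L⁻¹ = L⁻¹ - P2L p b := by
  rw [← hA, cfA_one hL, sub_sub_cancel]

lemma cfA_one_eq_iff {L : LS p} (hL : 1 ≤ L.orderTop) (b : (ZMod p)[X]) :
    cfA L 1 = P2L p b ↔ 1 ≤ (L⁻¹ - P2L p b).orderTop := by
  constructor
  · intro h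
    rw [← frac_inv_of_cfA_one_eq hL h]
    exact one_le_orderTop_frac _
  · intro h
    rw [cfA_one hL]
    conv_lhs => rw [← add_sub_cancel (P2L p b) L⁻¹, frac_P2L_add b h]
    exact add_sub_cancel_right _ _

lemma cfA_one_eq_and_le_orderTop_iff {L : LS p} (hL : 1 ≤ L.orderTop) {b : (ZMod p)[X]}
    (hb : b ≠ 0) {C : LS p} (hC : 1 ≤ C.orderTop) {n : ℤ} (hn : 1 ≤ n) :
    cfA L 1 = P2L p b ∧ (n : WithTop ℤ) ≤ (frac L⁻¹ - C).orderTop ↔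
      ((n + 2 * b.natDegree : ℤ) : WithTop ℤ) ≤ (L - (P2L p b + C)⁻¹).orderTop := by
  have hshift (T : WithTop ℤ) :
      ((n + 2 * b.natDegree : ℤ) : WithTop ℤ) ≤ T + ↑(2 * (b.natDegree : ℤ)) ↔ ↑n ≤ T := by
    rw [WithTop.coe_add, WithTop.add_le_add_iff_right WithTop.coe_ne_top]
  constructor
  · rintro ⟨hA, hnC⟩
    have hM := (cfA_one_eq_iff hL b).1 hA
    have hLord : L.orderTop = ((b.natDegree : ℤ) : WithTop ℤ) := by
      rw [← inv_inv L, ← add_sub_cancel (P2L p b) L⁻¹,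
        HahnSeries.orderTop_inv_of_orderTop_eq (orderTop_P2L_add hb hM), neg_neg]
    rwa [orderTop_sub_inv_P2L_add hb hC hLord, hshift, sub_add_eq_sub_sub,
      ← frac_inv_of_cfA_one_eq hL hA]
  · intro h
    have hYinv := HahnSeries.orderTop_inv_of_orderTop_eq (orderTop_P2L_add hb hC)
    rw [neg_neg] at hYinv
    have hLord : L.orderTop = ((b.natDegree : ℤ) : WithTop ℤ) := by
      have hlt : (P2L p b + C)⁻¹.orderTop < (L - (P2L p b + C)⁻¹).orderTop :=
        hYinv ▸ lt_of_lt_of_le (by exact_mod_cast (by omega)) h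
      rw [← sub_add_cancel L (P2L p b + C)⁻¹, HahnSeries.orderTop_add_eq_right hlt, hYinv]
    rw [orderTop_sub_inv_P2L_add hb hC hLord, hshift, sub_add_eq_sub_sub] at h
    have hM : 1 ≤ (L⁻¹ - P2L p b).orderTop := by
      rw [← sub_add_cancel (L⁻¹ - P2L p b) C]
      exact le_trans (le_min (le_trans (by exact_mod_cast hn) h) hC)
        HahnSeries.min_orderTop_le_orderTop_add
    have hA := (cfA_one_eq_iff hL b).2 hM
    exact ⟨hA, frac_inv_of_cfA_one_eq hL hA ▸ h⟩

def finContFrac : {k : ℕ} → (Fin k → (ZMod p)[X]) → LS p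
  | 0, _ => 0
  | _ + 1, B => (P2L p (B 0) + finContFrac fun j => B j.succ)⁻¹

lemma one_le_orderTop_finContFrac {k : ℕ} (B : Fin k → (ZMod p)[X])
    (hB : ∀ j, 1 ≤ (B j).natDegree) : 1 ≤ (finContFrac B).orderTop := by
  induction k with
  | zero => simp [finContFrac]
  | succ k ih =>
    rw [finContFrac, HahnSeries.orderTop_inv_of_orderTop_eq (orderTop_P2L_add
      (ne_zero_of_natDegree_gt (hB 0)) (ih _ fun j => hB j.succ)), neg_neg]
    exact_mod_cast hB 0

theorem cfA_eq_iff_le_orderTop_sub_finContFrac {k : ℕ} (B : Fin k → (ZMod p)[X])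
    (hB : ∀ j, 1 ≤ (B j).natDegree) {L : LS p} (hL : 1 ≤ L.orderTop) :
    (∀ j : Fin k, cfA L (j + 1) = P2L p (B j)) ↔
      (((2 * ∑ j, (B j).natDegree : ℕ) + 1 : ℤ) : WithTop ℤ) ≤ (L - finContFrac B).orderTop := by
  induction k generalizing L with
  | zero => simpa [finContFrac] using hL
  | succ k ih =>
    have htail := ih (fun j => B j.succ) (fun j => hB j.succ) (one_le_orderTop_frac L⁻¹)
    rw [Fin.forall_fin_succ]
    simp only [Fin.val_zero, Fin.val_succ, zero_add, add_assoc, one_add_one_eq_two,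
      cfA_add_two hL, htail]
    rw [cfA_one_eq_and_le_orderTop_iff hL (ne_zero_of_natDegree_gt (hB 0))
      (one_le_orderTop_finContFrac _ fun j => hB j.succ)
      (le_add_of_nonneg_left (Int.natCast_nonneg _)), finContFrac, Fin.sum_univ_succ]
    have hdeg : ((2 * ∑ j : Fin k, (B j.succ).natDegree : ℕ) + 1 : ℤ) + 2 * (B 0).natDegree =
        ((2 * ((B 0).natDegree + ∑ j : Fin k, (B j.succ).natDegree) : ℕ) + 1 : ℤ) := by
      push_cast
      ring
    rw [hdeg]

lemma le_orderTop_toLS_sub_iff (a : ℕ → ZMod p) {y : LS p} (hy : 1 ≤ y.orderTop) (m : ℕ) :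
    ((m + 1 : ℤ) : WithTop ℤ) ≤ (toLS p a - y).orderTop ↔
      ∀ i : Fin m, a i = y.coeff ((i : ℕ) + 1) := by
  simp only [HahnSeries.le_orderTop_iff_forall, WithTop.coe_lt_coe, HahnSeries.coeff_sub,
    sub_eq_zero, coeff_toLS]
  constructor
  · intro h i
    simpa using h ((i : ℕ) + 1) (by omega)
  · intro h j hj
    split_ifs with hj1
    · have := h ⟨(j - 1).toNat, by omega⟩
      rwa [show (((j - 1).toNat : ℕ) : ℤ) + 1 = j by omega] at this
    · exact (coeff_eq_zero_of_one_le_orderTop hy (not_le.1 hj1)).symm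

open MeasureTheory in
theorem statement6_general (p : ℕ) [Fact p.Prime]
    (μ : Measure (ℕ → ZMod p))
    (hμ : ∀ (m : ℕ) (v : Fin m → ZMod p),
      μ {a | ∀ i : Fin m, a (i : ℕ) = v i} = ((p : ℝ≥0∞))⁻¹ ^ m)
    (k : ℕ) (B : Fin k → Polynomial (ZMod p)) (hB : ∀ j, 1 ≤ (B j).natDegree) :
    μ {a : ℕ → ZMod p | ∀ j : Fin k, cfA (toLS p a) ((j : ℕ) + 1) = P2L p (B j)}
      = ((p : ℝ≥0∞))⁻¹ ^ (2 * ∑ j, (B j).natDegree) := by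
  have hcyl : {a : ℕ → ZMod p | ∀ j : Fin k, cfA (toLS p a) ((j : ℕ) + 1) = P2L p (B j)} =
      {a | ∀ i : Fin (2 * ∑ j, (B j).natDegree), a i = (finContFrac B).coeff ((i : ℕ) + 1)} :=
    Set.ext fun a =>
      (cfA_eq_iff_le_orderTop_sub_finContFrac B hB (one_le_orderTop_toLS a)).trans
        (le_orderTop_toLS_sub_iff a (one_le_orderTop_finContFrac B hB) _)
  rw [hcyl, hμ]

open MeasureTheory in
/-- Under the Haar (uniform product) measure on
`H ≅ Π_{i≥1} F_p` (via Laurent coefficients), the cylinder set of Laurent series whose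
first `k` continued fraction partial quotients are `B_1, …, B_k` has measure
`p^{-2(deg B_1 + ⋯ + deg B_k)}`. -/
theorem statement6 (p : ℕ) [Fact p.Prime]
    (μ : Measure (ℕ → ZMod p)) [IsProbabilityMeasure μ]
    (hμ : ∀ (m : ℕ) (v : Fin m → ZMod p),
      μ {a | ∀ i : Fin m, a (i : ℕ) = v i} = ((p : ℝ≥0∞))⁻¹ ^ m)
    (k : ℕ) (B : Fin k → Polynomial (ZMod p)) (hB : ∀ j, 1 ≤ (B j).natDegree) :
    μ {a : ℕ → ZMod p | ∀ j : Fin k, cfA (toLS p a) ((j : ℕ) + 1) = P2L p (B j)}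
      = ((p : ℝ≥0∞))⁻¹ ^ (2 * ∑ j, (B j).natDegree) :=
  statement6_general p μ hμ k B hB

end KH
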